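/- Let A be a Boolean algebra and E a quantifier on A. Define the relation S on F(A) by x S y iff {E c : c ∈ x} = {E c : c ∈ y}, with S[W] = {y ∈ F(A) : x S y for some x ∈ W}. Then for every a ∈ A, S[φ(a)] = φ(E a). -/

import Mathlib

/-- A quantifier on a Boolean algebra. -/
def IsQuantifierB {A : Type*} [BooleanAlgebra A] (E : A → A) : Prop :=
  (∀ a b : A, E (a ⊔ b) = E a ⊔ E b) ∧ E ⊥ = ⊥ ∧ (∀ a : A, E (E a) = E a) ∧
  (∀ a : A, a ≤ E a) ∧ (∀ a : A, E (E a)ᶜ = (E a)ᶜ)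

/-- A proper filter: nonempty, upward closed, closed under meets, not containing ⊥. -/
def IsPF {A : Type*} [Lattice A] [BoundedOrder A] (x : Set A) : Prop :=
  x.Nonempty ∧ (∀ a ∈ x, ∀ b : A, a ≤ b → b ∈ x) ∧
  (∀ a ∈ x, ∀ b ∈ x, a ⊓ b ∈ x) ∧ (⊥ : A) ∉ x

/-- The set of proper filters of `A`. -/
abbrev PF (A : Type*) [Lattice A] [BoundedOrder A] : Type _ := {x : Set A // IsPF x}

/-- `phi a` is the set of proper filters containing `a`. -/
def phi {A : Type*} [Lattice A] [BoundedOrder A] (a : A) : Set (PF A) := {x | a ∈ x.1}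

/-! The filter `x` witnessing `y ∈ S[φ(a)]` is generated by `a` together with `E[y]`. It is proper
because of Halmos' identity `E (p ⊓ E q) = E p ⊓ E q`: from `a ⊓ E c = ⊥` it would follow that
`E a ⊓ E c = E ⊥ = ⊥`, although both `E a` and `E c` lie in `y`. The same identity shows that
`E[x] ⊆ y`, so `E[x] = E[E[x]] ⊆ E[y]`; the reverse inclusion holds because `E[y] ⊆ x`. -/

namespace IsQuantifierB

variable {A : Type*} [BooleanAlgebra A] {E : A → A}

theorem map_sup (hE : IsQuantifierB E) (a b : A) : E (a ⊔ b) = E a ⊔ E b := hE.1 a b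

theorem map_compl_map (hE : IsQuantifierB E) (a : A) : E (E a)ᶜ = (E a)ᶜ := hE.2.2.2.2 a

theorem le_map (hE : IsQuantifierB E) (a : A) : a ≤ E a := hE.2.2.2.1 a

theorem map_map (hE : IsQuantifierB E) (a : A) : E (E a) = E a := hE.2.2.1 a

theorem map_bot (hE : IsQuantifierB E) : E ⊥ = ⊥ := hE.2.1

theorem monotone (hE : IsQuantifierB E) : Monotone E := fun p q h => by
  calc E p ≤ E p ⊔ E q := le_sup_left
    _ = E (p ⊔ q) := (hE.map_sup p q).symm
    _ = E q := by rw [sup_eq_right.mpr h]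

theorem map_inf_map (hE : IsQuantifierB E) (p q : A) : E (p ⊓ E q) = E p ⊓ E q := by
  have hsplit : E p = E (p ⊓ E q) ⊔ E (p ⊓ (E q)ᶜ) := by rw [← hE.map_sup, sup_inf_inf_compl]
  have hcompl : E (p ⊓ (E q)ᶜ) ≤ (E q)ᶜ :=
    (hE.monotone inf_le_right).trans_eq (hE.map_compl_map q)
  refine le_antisymm (le_inf (hE.monotone inf_le_left)
    ((hE.monotone inf_le_right).trans_eq (hE.map_map q))) ?_
  calc E p ⊓ E q ≤ (E (p ⊓ E q) ⊔ (E q)ᶜ) ⊓ E q := by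
        rw [hsplit]; exact inf_le_inf_right _ (sup_le_sup_left hcompl _)
    _ ≤ E (p ⊓ E q) := by rw [inf_sup_right, compl_inf_self, sup_bot_eq]; exact inf_le_left

end IsQuantifierB

namespace IsPF

variable {A : Type*} [Lattice A] [BoundedOrder A] {x : Set A}

theorem mem_of_le (hx : IsPF x) {a b : A} (ha : a ∈ x) (hab : a ≤ b) : b ∈ x :=
  hx.2.1 a ha b hab

theorem inf_mem (hx : IsPF x) {a b : A} (ha : a ∈ x) (hb : b ∈ x) : a ⊓ b ∈ x :=
  hx.2.2.1 a ha b hb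

theorem bot_notMem (hx : IsPF x) : (⊥ : A) ∉ x := hx.2.2.2

theorem image_subset_of_le (hx : IsPF x) {f : A → A} (hf : ∀ a, a ≤ f a) : f '' x ⊆ x := by
  rintro _ ⟨a, ha, rfl⟩
  exact hx.mem_of_le ha (hf a)

end IsPF

theorem isPF_upperClosure_of_base {A : Type*} [Lattice A] [BoundedOrder A] {s : Set A}
    (hne : s.Nonempty) (hbase : ∀ c₁ ∈ s, ∀ c₂ ∈ s, ∃ c ∈ s, c ≤ c₁ ⊓ c₂) (hbot : (⊥ : A) ∉ s) :
    IsPF {b | ∃ c ∈ s, c ≤ b} := by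
  refine ⟨hne.mono fun c hc => ⟨c, hc, le_rfl⟩, ?_, ?_, ?_⟩
  · rintro b ⟨c, hc, hcb⟩ b' hbb'
    exact ⟨c, hc, hcb.trans hbb'⟩
  · rintro b₁ ⟨c₁, hc₁, h₁⟩ b₂ ⟨c₂, hc₂, h₂⟩
    obtain ⟨c, hc, hle⟩ := hbase c₁ hc₁ c₂ hc₂
    exact ⟨c, hc, hle.trans (inf_le_inf h₁ h₂)⟩
  · rintro ⟨c, hc, hcbot⟩
    exact hbot (le_bot_iff.mp hcbot ▸ hc)

theorem IsQuantifierB.exists_isPF_image_eq {A : Type*} [BooleanAlgebra A] {E : A → A}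
    (hE : IsQuantifierB E) {y : Set A} (hy : IsPF y) {a : A} (ha : E a ∈ y) :
    ∃ x : Set A, IsPF x ∧ a ∈ x ∧ E '' x = E '' y := by
  have hEy : E '' y ⊆ y := hy.image_subset_of_le hE.le_map
  obtain ⟨c₀, hc₀⟩ := hy.1
  set s := (fun c => a ⊓ E c) '' y
  have hbase : ∀ c₁ ∈ s, ∀ c₂ ∈ s, ∃ c ∈ s, c ≤ c₁ ⊓ c₂ := by
    rintro _ ⟨c₁, hc₁, rfl⟩ _ ⟨c₂, hc₂, rfl⟩
    refine ⟨_, ⟨c₁ ⊓ c₂, hy.inf_mem hc₁ hc₂, rfl⟩, ?_⟩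
    exact le_inf (inf_le_inf_left a (hE.monotone inf_le_left))
      (inf_le_inf_left a (hE.monotone inf_le_right))
  have hmem : ∀ c ∈ y, E (a ⊓ E c) ∈ y := fun c hc =>
    hE.map_inf_map a c ▸ hy.inf_mem ha (hEy ⟨c, hc, rfl⟩)
  have hbot : (⊥ : A) ∉ s := by
    rintro ⟨c, hc, hcbot⟩
    exact hy.bot_notMem (hE.map_bot ▸ hcbot ▸ hmem c hc)
  refine ⟨{b | ∃ c ∈ s, c ≤ b}, isPF_upperClosure_of_base ⟨_, c₀, hc₀, rfl⟩ hbase hbot,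
    ⟨_, ⟨c₀, hc₀, rfl⟩, inf_le_left⟩, ?_⟩
  apply le_antisymm
  · rintro _ ⟨b, ⟨_, ⟨c, hc, rfl⟩, hcb⟩, rfl⟩
    exact ⟨E b, hy.mem_of_le (hmem c hc) (hE.monotone hcb), hE.map_map b⟩
  · rintro _ ⟨c, hc, rfl⟩
    exact ⟨E c, ⟨_, ⟨c, hc, rfl⟩, inf_le_right⟩, hE.map_map c⟩

theorem stmt17 {A : Type*} [BooleanAlgebra A] (E : A → A) (hE : IsQuantifierB E)
    (a : A) :
    {y : PF A | ∃ x : PF A, a ∈ x.1 ∧ E '' x.1 = E '' y.1} = phi (E a) := by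
  ext y
  constructor
  · rintro ⟨x, hax, hxy⟩
    exact y.2.image_subset_of_le hE.le_map (hxy ▸ ⟨a, hax, rfl⟩)
  · intro hy
    obtain ⟨x, hx, hax, hxy⟩ := hE.exists_isPF_image_eq y.2 hy
    exact ⟨⟨x, hx⟩, hax, hxy⟩
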